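/- Let D be a domain in ℂ, let μ : D → ℂ be measurable with |μ(z)| < 1 almost everywhere, let z₀ ∈ ℂ lie in the closure of D, and let 0 < ε < ε₀ < sup_{z∈D} |z − z₀|. Extend K^T_μ(·, z₀) by zero outside D and, for r > 0, set ‖K^T_μ‖₁(z₀, r) = r·∫_0^{2π} K^T_μ(z₀ + r·e^{iθ}, z₀) dθ. Assume ‖K^T_μ‖₁(z₀, r) ≠ ∞ for almost every r ∈ (ε, ε₀), and suppose I = ∫_ε^{ε₀} dr / ‖K^T_μ‖₁(z₀, r) satisfies 0 < I < ∞. Define η₀(r) = 1/(I·‖K^T_μ‖₁(z₀, r)) for r ∈ (ε, ε₀). Then ∫_ε^{ε₀} η₀(r) dr = 1 and ∫_{A ∩ D} K^T_μ(z, z₀)·η₀(|z − z₀|)² dm(z) = I⁻¹, where A = {z ∈ ℂ : ε < |z − z₀| < ε₀}. -/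

import Mathlib

open MeasureTheory ENNReal NNReal

/-- The tangent dilatation `K^T_μ(z, z₀) = |1 − (conj(z−z₀)/(z−z₀))·μ(z)|² / (1 − |μ(z)|²)`
of a Beltrami coefficient `μf` on `D`, extended by zero outside `D`, with the conventions
`a/0 = ∞` for `a > 0` and `0·∞ = 0` (realized via extended nonnegative reals). -/
noncomputable def tangentDilatation (D : Set ℂ) (μf : ℂ → ℂ) (z₀ z : ℂ) : ℝ≥0∞ :=
  Set.indicator D
    (fun w =>
      ENNReal.ofReal (‖1 - ((starRingEnd ℂ) (w - z₀) / (w - z₀)) * μf w‖ ^ 2) /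
        ENNReal.ofReal (1 - ‖μf w‖ ^ 2)) z

/-- `‖K^T_μ‖₁(z₀, r) = r·∫_0^{2π} K^T_μ(z₀ + r·e^{iθ}, z₀) dθ`, the `L¹`-norm of the
tangent dilatation (extended by zero outside `D`) over the circle of radius `r` about `z₀`. -/
noncomputable def circleNormKT (D : Set ℂ) (μf : ℂ → ℂ) (z₀ : ℂ) (r : ℝ) : ℝ≥0∞ :=
  ENNReal.ofReal r *
    ∫⁻ θ in Set.Ioo (0 : ℝ) (2 * Real.pi),
      tangentDilatation D μf z₀ (z₀ + (r : ℂ) * Complex.exp ((θ : ℂ) * Complex.I))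

/-!
Polar coordinates about `z₀` write the integral over the annulus as
`∫_ε^{ε₀} η₀(r)² ‖K^T_μ‖₁(z₀, r) dr`. Since `η₀ = (I ‖K^T_μ‖₁)⁻¹` and `‖K^T_μ‖₁(z₀, r)` is a.e.
neither `0` (because `I < ∞`) nor `∞`, the integrand is a.e. `I⁻² / ‖K^T_μ‖₁(z₀, r)`,
whose integral is `I⁻² · I = I⁻¹`; the normalization `∫ η₀ = I⁻¹ · I = 1` is the same computation.
-/

open Set Real

lemma continuous_circleMap_uncurry (c : ℂ) : Continuous fun p : ℝ × ℝ => circleMap c p.1 p.2 := by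
  unfold circleMap; fun_prop

lemma circleMap_add_pi (c : ℂ) (p : ℝ × ℝ) :
    circleMap c p.1 (p.2 + π) = c - Complex.polarCoord.symm p := by
  rw [Complex.polarCoord_symm_apply, circleMap]
  push_cast
  rw [add_mul, Complex.exp_add, Complex.exp_pi_mul_I, ← Complex.cos_add_sin_I]
  ring

lemma setLIntegral_Ioo_circleMap_eq_add_pi (c : ℂ) (r : ℝ) (f : ℂ → ℝ≥0∞) :
    ∫⁻ θ in Ioo 0 (2 * π), f (circleMap c r θ) =
      ∫⁻ θ in Ioo (-π) π, f (circleMap c r (θ + π)) := by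
  rw [← (measurePreserving_add_right volume π).setLIntegral_comp_preimage_emb
    (measurableEmbedding_addRight π), preimage_add_const_Ioo, zero_sub, two_mul,
    add_sub_cancel_right]

/-- Mathlib's polar coordinates take angles in `(-π, π)`; composing with the reflection
`z ↦ c - z` turns them into the angles `(0, 2π)` of `circleMap c`. -/
theorem lintegral_eq_lintegral_circleMap (c : ℂ) {f : ℂ → ℝ≥0∞} (hf : Measurable f) :
    ∫⁻ z, f z = ∫⁻ r in Ioi 0, ENNReal.ofReal r * ∫⁻ θ in Ioo 0 (2 * π), f (circleMap c r θ) := by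
  have hf' : Measurable fun p : ℝ × ℝ => f (circleMap c p.1 (p.2 + π)) :=
    hf.comp ((continuous_circleMap_uncurry c).comp
      (continuous_fst.prodMk (continuous_snd.add continuous_const))).measurable
  rw [← lintegral_sub_left_eq_self f c, ← Complex.lintegral_comp_polarCoord_symm,
    polarCoord_target, Measure.volume_eq_prod, ← Measure.prod_restrict]
  simp_rw [smul_eq_mul, ← circleMap_add_pi]
  rw [lintegral_prod _ (by fun_prop)]
  refine lintegral_congr fun r => ?_
  rw [lintegral_const_mul' _ _ ENNReal.ofReal_ne_top, setLIntegral_Ioo_circleMap_eq_add_pi]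

lemma measurable_tangentDilatation {D : Set ℂ} (hD : MeasurableSet D) {μf : ℂ → ℂ}
    (hμf : Measurable μf) (z₀ : ℂ) : Measurable (tangentDilatation D μf z₀) := by
  refine Measurable.indicator ?_ hD
  have : Measurable (starRingEnd ℂ) := Complex.continuous_conj.measurable
  fun_prop

lemma measurable_circleNormKT {D : Set ℂ} (hD : MeasurableSet D) {μf : ℂ → ℂ}
    (hμf : Measurable μf) (z₀ : ℂ) : Measurable (circleNormKT D μf z₀) :=
  measurable_id.ennreal_ofReal.mul <| Measurable.lintegral_prod_right' <|
    (measurable_tangentDilatation hD hμf z₀).comp (continuous_circleMap_uncurry z₀).measurable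

lemma dist_circleMap_center (c : ℂ) (r θ : ℝ) : dist (circleMap c r θ) c = |r| := by
  rw [Complex.dist_eq, circleMap_sub_center, norm_circleMap_zero]

theorem setLIntegral_annulus_mul_radial (c : ℂ) {a b : ℝ} (ha : 0 ≤ a) {f : ℂ → ℝ≥0∞}
    (hf : Measurable f) {g : ℝ → ℝ≥0∞} (hg : Measurable g) :
    ∫⁻ z in {z | a < dist z c ∧ dist z c < b}, f z * g (dist z c) =
      ∫⁻ r in Ioo a b, g r * (ENNReal.ofReal r * ∫⁻ θ in Ioo 0 (2 * π), f (circleMap c r θ)) := by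
  have hdist : Measurable fun z : ℂ => dist z c := measurable_id.dist measurable_const
  have hA : MeasurableSet {z | a < dist z c ∧ dist z c < b} := hdist measurableSet_Ioo
  have hfg : Measurable fun z => f z * g (dist z c) := hf.mul (hg.comp hdist)
  rw [← lintegral_indicator hA, lintegral_eq_lintegral_circleMap c (hfg.indicator hA),
    ← inter_eq_left.2 (Ioo_subset_Ioi_self.trans (Ioi_subset_Ioi ha) : Ioo a b ⊆ Ioi 0),
    ← setLIntegral_indicator measurableSet_Ioo]
  refine setLIntegral_congr_fun measurableSet_Ioi fun r (hr : 0 < r) => ?_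
  simp only [indicator, mem_ofPred_eq, dist_circleMap_center, abs_of_pos hr, ← mem_Ioo]
  split_ifs with hab
  · have hfr : Measurable fun θ => f (circleMap c r θ) := hf.comp (measurable_circleMap c r)
    rw [lintegral_mul_const _ hfr]
    ring
  · simp

lemma setLIntegral_inter_of_support_subset {α : Type*} [MeasurableSpace α] {μ : Measure α}
    {s t : Set α} (ht : MeasurableSet t) {f : α → ℝ≥0∞} (hf : f.support ⊆ t) :
    ∫⁻ x in s ∩ t, f x ∂μ = ∫⁻ x in s, f x ∂μ := by
  rw [inter_comm, ← setLIntegral_indicator ht, indicator_eq_self.2 hf]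

lemma support_tangentDilatation_subset (D : Set ℂ) (μf : ℂ → ℂ) (z₀ : ℂ) :
    (tangentDilatation D μf z₀).support ⊆ D :=
  support_indicator_subset

section Normalization

variable {α : Type*} [MeasurableSpace α] {ν : Measure α} {N : α → ℝ≥0∞} {I : ℝ≥0∞}

lemma lintegral_inv_const_mul_eq_one (hI : ∫⁻ x, (N x)⁻¹ ∂ν = I) (hI0 : I ≠ 0) (hItop : I ≠ ⊤) :
    ∫⁻ x, (I * N x)⁻¹ ∂ν = 1 := by
  simp_rw [ENNReal.mul_inv (Or.inl hI0) (Or.inl hItop)]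
  rw [lintegral_const_mul' _ _ (inv_ne_top.2 hI0), hI, ENNReal.inv_mul_cancel hI0 hItop]

lemma lintegral_inv_const_mul_sq_mul (hN : AEMeasurable N ν) (hNtop : ∀ᵐ x ∂ν, N x ≠ ⊤)
    (hI : ∫⁻ x, (N x)⁻¹ ∂ν = I) (hI0 : I ≠ 0) (hItop : I ≠ ⊤) :
    ∫⁻ x, (I * N x)⁻¹ ^ 2 * N x ∂ν = I⁻¹ := by
  have hN0 : ∀ᵐ x ∂ν, N x ≠ 0 := by
    filter_upwards [ae_lt_top' hN.inv (hI ▸ hItop)] with x hx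
    exact (inv_lt_top.1 hx).ne'
  have hpoint : ∀ᵐ x ∂ν, (I * N x)⁻¹ ^ 2 * N x = I⁻¹ ^ 2 * (N x)⁻¹ := by
    filter_upwards [hNtop, hN0] with x htop h0
    rw [ENNReal.mul_inv (Or.inl hI0) (Or.inl hItop), mul_pow, sq (N x)⁻¹, mul_assoc,
      mul_assoc, ENNReal.inv_mul_cancel h0 htop, mul_one]
  rw [lintegral_congr_ae hpoint, lintegral_const_mul' _ _ (pow_ne_top (inv_ne_top.2 hI0)), hI,
    sq, mul_assoc, ENNReal.inv_mul_cancel hI0 hItop, mul_one]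

end Normalization

theorem ring_integral_extremal_function_general (D : Set ℂ) (hD : IsOpen D)
    (μf : ℂ → ℂ) (hμm : Measurable μf)
    (z₀ : ℂ)
    (ε ε₀ : ℝ) (hε : 0 < ε)
    (hfin : ∀ᵐ r ∂(volume.restrict (Set.Ioo ε ε₀)), circleNormKT D μf z₀ r ≠ ⊤)
    (I : ℝ≥0∞) (hI : I = ∫⁻ r in Set.Ioo ε ε₀, (circleNormKT D μf z₀ r)⁻¹)
    (hIpos : 0 < I) (hIfin : I < ⊤)
    (η₀ : ℝ → ℝ≥0∞) (hη₀ : η₀ = fun r => (I * circleNormKT D μf z₀ r)⁻¹) :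
    (∫⁻ r in Set.Ioo ε ε₀, η₀ r) = 1 ∧
    (∫⁻ z in ({z : ℂ | ε < dist z z₀ ∧ dist z z₀ < ε₀} ∩ D),
        tangentDilatation D μf z₀ z * (η₀ (dist z z₀)) ^ 2) = I⁻¹ := by
  have hN := measurable_circleNormKT hD.measurableSet hμm z₀
  have hK := measurable_tangentDilatation hD.measurableSet hμm z₀
  have hη : Measurable η₀ := hη₀ ▸ (hN.const_mul I).inv
  refine ⟨hη₀ ▸ lintegral_inv_const_mul_eq_one hI.symm hIpos.ne' hIfin.ne, ?_⟩
  rw [setLIntegral_inter_of_support_subset hD.measurableSet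
      ((Function.support_mul_subset_left _ _).trans (support_tangentDilatation_subset D μf z₀)),
    setLIntegral_annulus_mul_radial z₀ hε.le hK (hη.pow_const 2), hη₀]
  exact lintegral_inv_const_mul_sq_mul hN.aemeasurable hfin hI.symm hIpos.ne' hIfin.ne

/-- The extremal function `η₀(r) = 1/(I·‖K^T_μ‖₁(z₀,r))` satisfies `∫_ε^{ε₀} η₀(r) dr = 1`
and realizes the lower bound: `∫_{A∩D} K^T_μ(z,z₀)·η₀(|z−z₀|)² dm(z) = I⁻¹`, where
`I = ∫_ε^{ε₀} dr/‖K^T_μ‖₁(z₀,r) ∈ (0, ∞)` and `A = {ε < |z−z₀| < ε₀}`. -/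
theorem ring_integral_extremal_function (D : Set ℂ) (hD : IsOpen D) (hDconn : IsConnected D)
    (μf : ℂ → ℂ) (hμm : Measurable μf)
    (hμ : ∀ᵐ z ∂(volume : Measure ℂ), z ∈ D → ‖μf z‖ < 1)
    (z₀ : ℂ) (hz₀ : z₀ ∈ closure D)
    (ε ε₀ : ℝ) (hε : 0 < ε) (hεε₀ : ε < ε₀)
    (hε₀ : ENNReal.ofReal ε₀ < ⨆ z ∈ D, edist z z₀)
    (hfin : ∀ᵐ r ∂(volume.restrict (Set.Ioo ε ε₀)), circleNormKT D μf z₀ r ≠ ⊤)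
    (I : ℝ≥0∞) (hI : I = ∫⁻ r in Set.Ioo ε ε₀, (circleNormKT D μf z₀ r)⁻¹)
    (hIpos : 0 < I) (hIfin : I < ⊤)
    (η₀ : ℝ → ℝ≥0∞) (hη₀ : η₀ = fun r => (I * circleNormKT D μf z₀ r)⁻¹) :
    (∫⁻ r in Set.Ioo ε ε₀, η₀ r) = 1 ∧
    (∫⁻ z in ({z : ℂ | ε < dist z z₀ ∧ dist z z₀ < ε₀} ∩ D),
        tangentDilatation D μf z₀ z * (η₀ (dist z z₀)) ^ 2) = I⁻¹ :=
  ring_integral_extremal_function_general D hD μf hμm z₀ ε ε₀ hε hfin I hI hIpos hIfin η₀ hη₀
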